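/- Let C be an extriangulated category with a proper class ξ, enough ξ-projectives and ξ-injectives, satisfying Condition (WIC). If n divides m, then every ξ-n-strongly Gprojective object is ξ-m-strongly Gprojective, i.e., n-SGP(ξ) ⊆ m-SGP(ξ). -/

import Mathlib

/-!
A (partial) axiomatization of extriangulated categories (Nakaoka–Palu) with a
proper class `ξ` of `𝔼`-triangles (Hu–Zhang–Zhou), sufficient to state the
results of "Gorenstein Objects in Extriangulated Categories".
-/

open CategoryTheory CategoryTheory.Limits Opposite

universe v u

variable (C : Type u) [Category.{v} C] [Preadditive C] [HasFiniteBiproducts C]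
  [HasBinaryBiproducts C]

/-- An extriangulated category structure on `C`: a biadditive functor
`𝔼 : Cᵒᵖ × C ⥤ Ab` together with a realization predicate `realizes f g δ`
saying that the conflation `A ⟶ B ⟶ X` realizes the `𝔼`-extension
`δ ∈ 𝔼(X,A)` (i.e. `s(δ) = [A ⟶ B ⟶ X]`). -/
structure ExtCat where
  E : Cᵒᵖ ⥤ C ⥤ AddCommGrpCat.{v}
  realizes : ∀ {A B X : C}, (A ⟶ B) → (B ⟶ X) → ((E.obj (op X)).obj A) → Prop
  /-- `s` is defined on every `𝔼`-extension. -/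
  realize_exists : ∀ {A X : C} (δ : (E.obj (op X)).obj A),
    ∃ (B : C) (f : A ⟶ B) (g : B ⟶ X), realizes f g δ
  /-- the split `𝔼`-extension `0` is realized by the biproduct sequence. -/
  realizes_split : ∀ (A X : C),
    realizes (biprod.inl : A ⟶ A ⊞ X) (biprod.snd : A ⊞ X ⟶ X)
      (0 : (E.obj (op X)).obj A)
  /-- conflations compose to zero. -/
  comp_eq_zero : ∀ {A B X : C} {f : A ⟶ B} {g : B ⟶ X} {δ : (E.obj (op X)).obj A}, realizes f g δ → f ≫ g = 0
  /-- realizations are closed under isomorphism of the middle term. -/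
  realizes_iso : ∀ {A B B' X : C} {f : A ⟶ B} {g : B ⟶ X} {δ : (E.obj (op X)).obj A} (e : B ≅ B'),
    realizes f g δ → realizes (f ≫ e.hom) (e.inv ≫ g) δ

variable {C}

namespace ExtCat

variable (S : ExtCat C)

/-- `f` is an inflation. -/
def IsInflation {A B : C} (f : A ⟶ B) : Prop :=
  ∃ (X : C) (g : B ⟶ X) (δ : (S.E.obj (op X)).obj A), S.realizes f g δ

/-- `g` is a deflation. -/
def IsDeflation {B X : C} (g : B ⟶ X) : Prop :=
  ∃ (A : C) (f : A ⟶ B) (δ : (S.E.obj (op X)).obj A), S.realizes f g δ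

/-- Condition (WIC). -/
def WIC : Prop :=
  (∀ {A B X : C} (f : A ⟶ B) (g : B ⟶ X), S.IsInflation (f ≫ g) → S.IsInflation f) ∧
  (∀ {A B X : C} (f : A ⟶ B) (g : B ⟶ X), S.IsDeflation (f ≫ g) → S.IsDeflation g)

/-- A proper class `ξ` of `𝔼`-triangles: closed under isomorphisms, finite
coproducts, containing the split triangles, closed under base change and
cobase change (and saturated). -/
structure ProperClass where
  tri : ∀ {A B X : C}, (A ⟶ B) → (B ⟶ X) → ((S.E.obj (op X)).obj A) → Prop
  realized : ∀ {A B X : C} {f : A ⟶ B} {g : B ⟶ X} {δ : (S.E.obj (op X)).obj A}, tri f g δ → S.realizes f g δ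
  iso_closed : ∀ {A B B' X : C} {f : A ⟶ B} {g : B ⟶ X} {δ : (S.E.obj (op X)).obj A} (e : B ≅ B'),
    tri f g δ → tri (f ≫ e.hom) (e.inv ≫ g) δ
  split_mem : ∀ {A B X : C} (f : A ⟶ B) (g : B ⟶ X),
    S.realizes f g (0 : (S.E.obj (op X)).obj A) → tri f g 0
  sum_mem : ∀ {A B X A' B' X' : C} {f : A ⟶ B} {g : B ⟶ X} {δ : (S.E.obj (op X)).obj A}
      {f' : A' ⟶ B'} {g' : B' ⟶ X'} {δ' : (S.E.obj (op X')).obj A'}, tri f g δ → tri f' g' δ' →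
    ∀ δ'', S.realizes (biprod.map f f') (biprod.map g g') δ'' →
      tri (biprod.map f f') (biprod.map g g') δ''
  base_change : ∀ {A B X : C} {f : A ⟶ B} {g : B ⟶ X} {δ : (S.E.obj (op X)).obj A}, tri f g δ →
    ∀ {X' : C} (c : X' ⟶ X) {B' : C} {f' : A ⟶ B'} {g' : B' ⟶ X'},
      S.realizes f' g' ((S.E.map c.op).app A δ) → tri f' g' ((S.E.map c.op).app A δ)
  cobase_change : ∀ {A B X : C} {f : A ⟶ B} {g : B ⟶ X} {δ : (S.E.obj (op X)).obj A}, tri f g δ →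
    ∀ {A' : C} (a : A ⟶ A') {B' : C} {f' : A' ⟶ B'} {g' : B' ⟶ X},
      S.realizes f' g' ((S.E.obj (op X)).map a δ) → tri f' g' ((S.E.obj (op X)).map a δ)

variable {S} (ξ : S.ProperClass)

/-- `P` is `ξ`-projective: `Hom(P,-)` sends every `𝔼`-triangle in `ξ` to a
short exact sequence of abelian groups. -/
def IsXiProjective (P : C) : Prop :=
  ∀ {A B X : C} {f : A ⟶ B} {g : B ⟶ X} {δ : (S.E.obj (op X)).obj A}, ξ.tri f g δ →
    (∀ a : P ⟶ A, a ≫ f = 0 → a = 0) ∧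
    (∀ h : P ⟶ B, h ≫ g = 0 → ∃ a : P ⟶ A, a ≫ f = h) ∧
    (∀ x : P ⟶ X, ∃ h : P ⟶ B, h ≫ g = x)

/-- `I` is `ξ`-injective. -/
def IsXiInjective (I : C) : Prop :=
  ∀ {A B X : C} {f : A ⟶ B} {g : B ⟶ X} {δ : (S.E.obj (op X)).obj A}, ξ.tri f g δ →
    (∀ x : X ⟶ I, g ≫ x = 0 → x = 0) ∧
    (∀ h : B ⟶ I, f ≫ h = 0 → ∃ x : X ⟶ I, g ≫ x = h) ∧
    (∀ a : A ⟶ I, ∃ h : B ⟶ I, f ≫ h = a)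

/-- `C` has enough `ξ`-projectives. -/
def EnoughProjectives : Prop :=
  ∀ A : C, ∃ (K P : C) (f : K ⟶ P) (g : P ⟶ A)
    (δ : (S.E.obj (op A)).obj K), ξ.tri f g δ ∧ IsXiProjective ξ P

/-- `C` has enough `ξ`-injectives. -/
def EnoughInjectives : Prop :=
  ∀ A : C, ∃ (I X : C) (f : A ⟶ I) (g : I ⟶ X)
    (δ : (S.E.obj (op X)).obj A), ξ.tri f g δ ∧ IsXiInjective ξ I

/-- The sequence `A ⟶ B ⟶ X` is `C(-,Q)`-exact: applying `Hom(-,Q)` gives a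
short exact sequence `0 → Hom(X,Q) → Hom(B,Q) → Hom(A,Q) → 0`. -/
def ContraExact (Q : C) {A B X : C} (f : A ⟶ B) (g : B ⟶ X) : Prop :=
  (∀ x : X ⟶ Q, g ≫ x = 0 → x = 0) ∧
  (∀ h : B ⟶ Q, f ≫ h = 0 → ∃ x : X ⟶ Q, g ≫ x = h) ∧
  (∀ a : A ⟶ Q, ∃ h : B ⟶ Q, f ≫ h = a)

/-- `A` is a syzygy object of a complete `C(-,P(ξ))`-exact `ξ`-exact complex
with all components satisfying `W`; taking `W = IsXiProjective ξ` gives the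
`ξ`-Gorenstein projective objects. -/
def IsRelGProjective (W : C → Prop) (A : C) : Prop :=
  ∃ (K G : ℤ → C) (g : ∀ n, K (n+1) ⟶ G n) (f : ∀ n, G n ⟶ K n)
    (δ : ∀ n, (S.E.obj (op (K n))).obj (K (n+1))),
    (∀ n, ξ.tri (g n) (f n) (δ n)) ∧ (∀ n, W (G n)) ∧
    (∀ n (Q : C), IsXiProjective ξ Q → ContraExact Q (g n) (f n)) ∧
    ∃ n, Nonempty (A ≅ K n)

/-- `ξ`-Gorenstein projective objects: syzygies of complete `ξ`-projective
resolutions. -/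
def IsGProjective (A : C) : Prop := IsRelGProjective ξ (IsXiProjective ξ) A

/-- Iterated Gorenstein classes: `𝒢⁰𝒫(ξ) = 𝒫(ξ)`, `𝒢ⁿ⁺¹𝒫(ξ)` is obtained by
taking syzygies of complete `C(-,𝒫(ξ))`-exact complexes with components in
`𝒢ⁿ𝒫(ξ)`. -/
def GPow : ℕ → C → Prop
  | 0, A => IsXiProjective ξ A
  | n+1, A => IsRelGProjective ξ (GPow n) A

/-- `ξ`-Gorenstein projective dimension `≤ n`. -/
def GpdLE : ℕ → C → Prop
  | 0, A => IsGProjective ξ A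
  | n+1, A => ∃ (K G : C) (f : K ⟶ G) (g : G ⟶ A)
      (δ : (S.E.obj (op A)).obj K), ξ.tri f g δ ∧ IsGProjective ξ G ∧ GpdLE n K

/-- The `ξ`-Gorenstein projective dimension, valued in `ℕ∞` (`⊤` if infinite). -/
noncomputable def Gpd (A : C) : ℕ∞ :=
  sInf ((fun n : ℕ => (n : ℕ∞)) '' {n : ℕ | GpdLE ξ n A})

/-- `ξ`-projective dimension `≤ n`. -/
def PdLE : ℕ → C → Prop
  | 0, A => IsXiProjective ξ A
  | n+1, A => ∃ (K P : C) (f : K ⟶ P) (g : P ⟶ A)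
      (δ : (S.E.obj (op A)).obj K), ξ.tri f g δ ∧ IsXiProjective ξ P ∧ PdLE n K

/-- The `ξ`-projective dimension, valued in `ℕ∞`. -/
noncomputable def Pd (A : C) : ℕ∞ :=
  sInf ((fun n : ℕ => (n : ℕ∞)) '' {n : ℕ | PdLE ξ n A})

/-- `K` is an `n`-th `ξ`-syzygy of `A`. -/
def IsSyzygy : ℕ → C → C → Prop
  | 0, A, K => Nonempty (K ≅ A)
  | n+1, A, K => ∃ (L P : C) (f : L ⟶ P) (g : P ⟶ A)
      (δ : (S.E.obj (op A)).obj L), ξ.tri f g δ ∧ IsXiProjective ξ P ∧ IsSyzygy n L K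

/-- `A` is `ξ`-`n`-strongly Gorenstein projective: there is a `C(-,𝒫(ξ))`-exact
`ξ`-exact complex `0 → A → P_{n-1} → ⋯ → P_0 → A → 0` with all `P_i`
`ξ`-projective, encoded by its resolution `𝔼`-triangles
`K_{i+1} → P_i → K_i` (`K_n = K_0 = A`). -/
def IsNSG (n : ℕ) (A : C) : Prop :=
  ∃ (K P : ℕ → C) (g : ∀ i, K (i+1) ⟶ P i) (f : ∀ i, P i ⟶ K i)
    (δ : ∀ i, (S.E.obj (op (K i))).obj (K (i+1))),
    (∀ i < n, ξ.tri (g i) (f i) (δ i)) ∧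
    (∀ i < n, IsXiProjective ξ (P i)) ∧
    (∀ i < n, ∀ Q : C, IsXiProjective ξ Q → ContraExact Q (g i) (f i)) ∧
    K 0 = A ∧ K n = A

/-- Variant used in the characterization theorem: a `ξ`-exact complex
`0 → A → P_{n-1} → ⋯ → P_0 → A → 0` whose components satisfy `cond` and whose
direct sum of syzygies `⊕_{i=1}^n K_i` satisfies `mid`. -/
def NSGWith (cond : C → Prop) (mid : C → Prop) (n : ℕ) (A : C) : Prop :=
  ∃ (K P : ℕ → C) (g : ∀ i, K (i+1) ⟶ P i) (f : ∀ i, P i ⟶ K i)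
    (δ : ∀ i, (S.E.obj (op (K i))).obj (K (i+1))),
    (∀ i < n, ξ.tri (g i) (f i) (δ i)) ∧
    (∀ i < n, cond (P i)) ∧
    K 0 = A ∧ K n = A ∧ mid (⨁ fun i : Fin n => K (i + 1))

/-- `A` has a `C(-,𝒫(ξ))`-exact resolution by objects satisfying `W`. -/
def HasPexactRes (W : C → Prop) (A : C) : Prop :=
  ∃ (K G : ℕ → C) (g : ∀ i, K (i+1) ⟶ G i) (f : ∀ i, G i ⟶ K i)
    (δ : ∀ i, (S.E.obj (op (K i))).obj (K (i+1))),
    (∀ i, ξ.tri (g i) (f i) (δ i)) ∧ (∀ i, W (G i)) ∧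
    (∀ i (Q : C), IsXiProjective ξ Q → ContraExact Q (g i) (f i)) ∧
    K 0 = A

/-- Countable direct sums of `ξ`-Gorenstein projective objects exist. -/
def HasGProjCountableSums : Prop :=
  ∀ F : ℕ → C, (∀ i, IsGProjective ξ (F i)) → HasCoproduct F

/-- `ξ` is closed under countable direct sums. -/
def XiClosedCountableSums : Prop :=
  ∀ (A B X : ℕ → C) (f : ∀ i, A i ⟶ B i) (g : ∀ i, B i ⟶ X i)
    (δ : ∀ i, (S.E.obj (op (X i))).obj (A i)),
    (∀ i, ξ.tri (f i) (g i) (δ i)) →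
    ∀ [HasCoproduct A] [HasCoproduct B] [HasCoproduct X],
      ∃ δ', ξ.tri (Limits.Sigma.map f) (Limits.Sigma.map g) δ'

/-- The vanishing `ξxt¹_ξ(A,Q) = 0`, expressed by its standard
characterization: every `𝔼`-triangle `Q → B → A` in `ξ` splits. -/
def XiExt1Vanishes (A Q : C) : Prop :=
  ∀ {B : C} (f : Q ⟶ B) (g : B ⟶ A) (δ : (S.E.obj (op A)).obj Q),
    ξ.tri f g δ → δ = 0

/-- `C` is a Krull–Schmidt category: every object is a finite biproduct of
objects with local endomorphism rings. -/
def IsKrullSchmidt (C : Type u) [Category.{v} C] [Preadditive C]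
    [HasFiniteBiproducts C] : Prop :=
  ∀ X : C, ∃ (n : ℕ) (Y : Fin n → C),
    (∀ i, IsLocalRing (End (Y i))) ∧ Nonempty (X ≅ ⨁ Y)

end ExtCat

open CategoryTheory CategoryTheory.Limits Opposite ExtCat

variable {C : Type u} [Category.{v} C] [Preadditive C] [HasFiniteBiproducts C]
  [HasBinaryBiproducts C]

private lemma tri_cast_aux {S : ExtCat C} (ξ : S.ProperClass) {A A' B X : C}
    (h : A' = A) {f : A ⟶ B} {g : B ⟶ X} {δ : (S.E.obj (op X)).obj A}
    (e : ((S.E.obj (op X)).obj A : Type v) = ((S.E.obj (op X)).obj A' : Type v))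
    (ht : ξ.tri f g δ) :
    ξ.tri (eqToHom h ≫ f) g (cast e δ) := by
  subst h
  rw [eqToHom_refl, Category.id_comp]
  exact ht

private lemma contra_cast_aux {Q A A' B X : C}
    (h : A' = A) {f : A ⟶ B} {g : B ⟶ X} (hc : ContraExact Q f g) :
    ContraExact Q (eqToHom h ≫ f) g := by
  subst h
  rw [eqToHom_refl, Category.id_comp]
  exact hc

/-- If `n ∣ m` then every `ξ`-`n`-strongly Gprojective object is
`ξ`-`m`-strongly Gprojective. -/
theorem nsg_subset_of_dvd (S : ExtCat C) (ξ : S.ProperClass)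
    (hE : EnoughProjectives ξ) (hI : EnoughInjectives ξ) (hW : S.WIC)
    (n m : ℕ) (hn : 1 ≤ n) (hm : 1 ≤ m) (hdvd : n ∣ m) (A : C)
    (hA : IsNSG ξ n A) : IsNSG ξ m A := by
  obtain ⟨K, P, g, f, δ, htri, hproj, hex, hK0, hKn⟩ := hA
  have hn0 : 0 < n := hn
  have h : ∀ i : ℕ, K ((i + 1) % n) = K (i % n + 1) := by
    intro i
    have hmm : (i % n + 1) % n = (i + 1) % n := Nat.mod_add_mod i n 1
    rcases Nat.lt_or_ge (i % n + 1) n with hlt | hge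
    · rw [← hmm, Nat.mod_eq_of_lt hlt]
    · have h1 : i % n < n := Nat.mod_lt _ hn0
      have h2 : i % n + 1 = n := by omega
      rw [← hmm, h2, Nat.mod_self]
      exact hK0.trans hKn.symm
  have hmn : m % n = 0 := by obtain ⟨k, rfl⟩ := hdvd; exact Nat.mul_mod_right n k
  refine ⟨fun i => K (i % n), fun i => P (i % n),
    fun i => eqToHom (h i) ≫ g (i % n), fun i => f (i % n),
    fun i => cast (congrArg (fun Z => ((S.E.obj (op (K (i % n)))).obj Z : Type v)) (h i).symm) (δ (i % n)),
    fun i _ => tri_cast_aux ξ (h i) _ (htri _ (Nat.mod_lt _ hn0)),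
    fun i _ => hproj _ (Nat.mod_lt _ hn0),
    fun i _ Q hQ => contra_cast_aux (h i) (hex _ (Nat.mod_lt _ hn0) Q hQ),
    by show K (0 % n) = A; rw [Nat.zero_mod]; exact hK0,
    by show K (m % n) = A; rw [hmn]; exact hK0⟩
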